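/- Let G and H be non-archimedean CLI Polish groups, 𝒢 = (G_n) ∈ dgnb(G) and ℋ = (H_n) ∈ dgnb(H). Then 𝒢×ℋ = (G_n × H_n) ∈ dgnb(G × H), and for every k < ω, ρ^k(𝒢×ℋ) = max{ρ^k(𝒢), ρ^k(ℋ)}; moreover ρ(𝒢×ℋ) = max{ρ(𝒢), ρ(ℋ)} and rank(G × H) = max{rank(G), rank(H)}. -/

import Mathlib

noncomputable section

/-- `omegaPart a` is ω(a): the largest limit ordinal `≤ a`, or `0` if there is none. -/
def omegaPart (a : Ordinal) : Ordinal :=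
  sSup {b : Ordinal | (b = 0 ∨ Order.IsSuccLimit b) ∧ b ≤ a}

/-- `IsTree lt` says that the binary relation `lt` on `T` is a tree order: it is irreflexive,
transitive, and the set of predecessors of any node is finite and linearly ordered. -/
def IsTree {T : Type*} (lt : T → T → Prop) : Prop :=
  (∀ s, ¬ lt s s) ∧
  (∀ s t u, lt s t → lt t u → lt s u) ∧
  (∀ s, {t | lt t s}.Finite) ∧
  (∀ s t u, lt t s → lt u s → t = u ∨ lt t u ∨ lt u t)

/-- The length `lh s` of a node of a tree: the number of its strict predecessors. -/
def lh {T : Type*} (lt : T → T → Prop) (s : T) : ℕ :=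
  Nat.card {t | lt t s}

/-- The rank `ρ(T)` of a tree `(T, lt)`: for a well-founded tree it is
`sup { ρ_T(s) + 1 : s ∈ T }` where `ρ_T(s) = sup { ρ_T(t) + 1 : s < t }`;
for an ill-founded tree we use the junk value `0`. -/
def rhoRel {T : Type u} (lt : T → T → Prop) : Ordinal.{u} :=
  letI := Classical.dec (WellFounded (Function.swap lt))
  if h : WellFounded (Function.swap lt) then ⨆ s : T, Order.succ ((h.apply s).rank) else 0

/-- The nodes of the tree `T_ℰ^X` associated to a sequence `E` of (equivalence) relations
on `X`: pairs `(n, C)` where `C` is a non-singleton class `[x]_{E n}`. -/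
def TreeNode (X : Type u) (E : ℕ → X → X → Prop) : Type u :=
  {p : ℕ × Set X // ∃ x : X, p.2 = {y | E p.1 x y} ∧ p.2 ≠ {x}}

/-- The tree order on `T_ℰ^X`: `(n, C) < (m, D)` iff `n < m` and `C ⊇ D`. -/
def nodeLT {X : Type u} (E : ℕ → X → X → Prop) :
    TreeNode X E → TreeNode X E → Prop :=
  fun s t => s.1.1 < t.1.1 ∧ t.1.2 ⊆ s.1.2

/-- The tree `T_ℰ^X` is well-founded: no infinite strictly increasing sequence. -/
def TreeWF (X : Type u) (E : ℕ → X → X → Prop) : Prop :=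
  WellFounded (Function.swap (nodeLT E))

/-- The rank `ρ(T_ℰ^X)`. -/
def treeRho (X : Type u) (E : ℕ → X → X → Prop) : Ordinal.{u} :=
  rhoRel (nodeLT E)

/-- A Polish group: a topological group whose topology is Polish. -/
def IsPolishGroup (G : Type u) [Group G] [TopologicalSpace G] : Prop :=
  IsTopologicalGroup G ∧ PolishSpace G

/-- A topological group is non-archimedean if the open subgroups form a
neighborhood base of the identity. -/
def IsNonArch (G : Type u) [Group G] [TopologicalSpace G] : Prop :=
  ∀ U ∈ nhds (1 : G), ∃ H : Subgroup G, IsOpen (H : Set G) ∧ (H : Set G) ⊆ U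

/-- A topological group is CLI if it admits a compatible complete left-invariant metric. -/
def IsCLI (G : Type u) [Group G] [TopologicalSpace G] : Prop :=
  ∃ m : MetricSpace G,
    m.toUniformSpace.toTopologicalSpace = ‹TopologicalSpace G› ∧
    @CompleteSpace G m.toUniformSpace ∧
    ∀ g h k : G, m.dist (g * h) (g * k) = m.dist h k

/-- A topological group is TSI if it admits a compatible complete two-sided-invariant metric. -/
def IsTSI (G : Type u) [Group G] [TopologicalSpace G] : Prop :=
  ∃ m : MetricSpace G,
    m.toUniformSpace.toTopologicalSpace = ‹TopologicalSpace G› ∧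
    @CompleteSpace G m.toUniformSpace ∧
    ∀ g h k : G, m.dist (g * h) (g * k) = m.dist h k ∧ m.dist (h * g) (k * g) = m.dist h k

/-- `Dgnb G` is the set `dgnb(G)`: decreasing sequences `(G_n)` of open subgroups of `G`
with `G_0 = G` forming a neighborhood base of `1_G`. -/
structure Dgnb (G : Type u) [Group G] [TopologicalSpace G] where
  seq : ℕ → Subgroup G
  isOpen : ∀ n, IsOpen ((seq n : Set G))
  antitone : ∀ n, seq (n + 1) ≤ seq n
  zero_eq_top : seq 0 = ⊤
  basis : ∀ U ∈ nhds (1 : G), ∃ n, ((seq n : Set G)) ⊆ U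

/-- The orbit equivalence relation of (the action of) a subgroup `H ≤ G` on a `G`-space `X`:
`x ∼ y` iff `g • x = y` for some `g ∈ H`. -/
def subOrbit {G : Type u} [Group G] (H : Subgroup G) (X : Type v) [MulAction G X] :
    X → X → Prop :=
  fun x y => ∃ g ∈ H, g • x = y

/-- The tree `T_𝒢^X` of a `𝒢 ∈ dgnb(G)` and a `G`-space `X`: nodes are pairs `(n, C)`
with `C` a non-singleton `G_n`-orbit. We record it by its defining sequence of relations. -/
def dgnbRel {G : Type u} [Group G] [TopologicalSpace G] (𝒢 : Dgnb G) (X : Type v)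
    [MulAction G X] : ℕ → X → X → Prop :=
  fun n => subOrbit (𝒢.seq n) X

/-- `ρ^k(𝒢) = ρ(T_𝒢^{G/G_k})`, where `G` acts by left translation on `G/G_k`. -/
def rhoK {G : Type u} [Group G] [TopologicalSpace G] (𝒢 : Dgnb G) (k : ℕ) : Ordinal.{u} :=
  treeRho (G ⧸ 𝒢.seq k) (dgnbRel 𝒢 (G ⧸ 𝒢.seq k))

/-- `ρ(𝒢) = ρ(T_𝒢^{X(𝒢)})` where `X(𝒢) = ⊔_k G/G_k` is the disjoint union of the coset
spaces, with `G` acting by left translation on each summand. -/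
def rhoDgnb {G : Type u} [Group G] [TopologicalSpace G] (𝒢 : Dgnb G) : Ordinal.{u} :=
  treeRho (Σ k : ℕ, G ⧸ 𝒢.seq k)
    (fun n p q => ∃ g ∈ 𝒢.seq n, q = ⟨p.1, g • p.2⟩)

/-- `G` is α-CLI if `ρ(𝒢) ≤ ω·α` for any (equivalently, some) `𝒢 ∈ dgnb(G)`. -/
def IsAlphaCLI (G : Type u) [Group G] [TopologicalSpace G] (α : Ordinal.{u}) : Prop :=
  ∀ 𝒢 : Dgnb G, rhoDgnb 𝒢 ≤ Ordinal.omega0 * α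

/-- `G` is L-α-CLI if `rank(G) ≤ α`, i.e. `ω(ρ(𝒢)) ≤ ω·α` for any (equivalently, some)
`𝒢 ∈ dgnb(G)`. -/
def IsLAlphaCLI (G : Type u) [Group G] [TopologicalSpace G] (α : Ordinal.{u}) : Prop :=
  ∀ 𝒢 : Dgnb G, omegaPart (rhoDgnb 𝒢) ≤ Ordinal.omega0 * α


/-!
A node `(n, [x]_n × [y]_n)` of the tree of a product has rank at most the larger of the ranks of
its factors `(n, [x]_n)` and `(n, [y]_n)` (a singleton factor counting as `0`): passing to a child
strictly lowers the rank of a non-singleton factor and does not raise the other one. Conversely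
each factor tree embeds into the product tree through `x ↦ (x, y₀)`. The tree of
`X(𝒢) = ⊔_k G/G_k` is the disjoint union of the trees of the `G/G_k`, so `ρ(𝒢) = sup_k ρ^k(𝒢)`,
and `ω(·)` is monotone, hence commutes with `max`.

All of this needs the trees to be well-founded (`rhoRel` is `0` on an ill-founded tree), and this
is where the CLI hypothesis enters.
-/

open Filter Topology Function

theorem Acc.rank_le_of_forall_rel_lt {α : Type u} {r : α → α → Prop} (f : α → Ordinal.{u})
    (hf : ∀ a b, r a b → f a < f b) {a : α} (h : Acc r a) : h.rank ≤ f a := by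
  induction h with
  | intro a h ih =>
    rw [Acc.rank_eq]
    exact Ordinal.iSup_le fun b => Order.succ_le_of_lt ((ih b b.2).trans_lt (hf b a b.2))

section RhoRel

variable {T : Type u} {lt : T → T → Prop}

theorem rhoRel_eq_iSup (hwf : WellFounded (swap lt)) :
    rhoRel lt = ⨆ s, Order.succ (hwf.apply s).rank :=
  dif_pos hwf

theorem rank_lt_rhoRel (hwf : WellFounded (swap lt)) (s : T) : (hwf.apply s).rank < rhoRel lt :=
  (Order.lt_succ _).trans_le <| (rhoRel_eq_iSup hwf).symm ▸
    Ordinal.le_iSup (fun s => Order.succ (hwf.apply s).rank) s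

theorem wellFounded_swap_of_lt (f : T → Ordinal.{u}) (hf : ∀ s t, lt s t → f t < f s) :
    WellFounded (swap lt) :=
  Subrelation.wf (fun {s t} h => hf t s h) (InvImage.wf f Ordinal.lt_wf)

theorem rhoRel_le_of_lt (f : T → Ordinal.{u}) (hf : ∀ s t, lt s t → f t < f s) {α : Ordinal.{u}}
    (hα : ∀ s, f s < α) : rhoRel lt ≤ α := by
  have hwf := wellFounded_swap_of_lt f hf
  rw [rhoRel_eq_iSup hwf]
  exact Ordinal.iSup_le fun s => Order.succ_le_of_lt
    (((hwf.apply s).rank_le_of_forall_rel_lt f fun a b h => hf b a h).trans_lt (hα s))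

theorem rhoRel_le_of_strictMono {T' : Type u} {lt' : T' → T' → Prop} (φ : T → T')
    (hφ : ∀ s t, lt s t → lt' (φ s) (φ t)) (hwf : WellFounded (swap lt')) :
    rhoRel lt ≤ rhoRel lt' :=
  rhoRel_le_of_lt (fun s => (hwf.apply (φ s)).rank)
    (fun s t h => (hwf.apply (φ s)).rank_lt_of_rel (hφ s t h)) (fun s => rank_lt_rhoRel hwf (φ s))

end RhoRel

section TreeNode

variable {X : Type u} {E : ℕ → X → X → Prop}

def TreeNode.rep (s : TreeNode X E) : X :=
  Classical.choose s.2

theorem TreeNode.set_eq (s : TreeNode X E) : s.1.2 = {y | E s.1.1 s.rep y} :=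
  (Classical.choose_spec s.2).1

theorem TreeNode.class_ne (s : TreeNode X E) : {y | E s.1.1 s.rep y} ≠ {s.rep} :=
  s.set_eq ▸ (Classical.choose_spec s.2).2

def TreeNode.ofClass (n : ℕ) (x : X) (h : {y | E n x y} ≠ {x}) : TreeNode X E :=
  ⟨(n, {y | E n x y}), x, rfl, h⟩

theorem treeWF_of_forall_exists_eq_singleton (hrefl : ∀ n x, E n x x)
    (h : ∀ (n : ℕ → ℕ) (x : ℕ → X), StrictMono n → (∀ i, E (n i) (x i) (x (i + 1))) →
      ∃ i, {y | E (n i) (x i) y} = {x i}) :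
    TreeWF X E := by
  refine wellFounded_iff_isEmpty_descending_chain.2 ⟨fun ⟨f, hf⟩ => ?_⟩
  have hstep : ∀ i, E (f i).1.1 (f i).rep (f (i + 1)).rep := by
    intro i
    have hmem : (f (i + 1)).rep ∈ (f (i + 1)).1.2 := (f (i + 1)).set_eq ▸ hrefl _ _
    have := (hf i).2 hmem
    rw [(f i).set_eq] at this
    exact this
  obtain ⟨i, hi⟩ := h _ _ (strictMono_nat_of_lt_succ fun i => (hf i).1) hstep
  exact (f i).class_ne hi

/-- An ordinal labelling of the nodes `(n, [x]_n)` of `T_E^X` that strictly decreases along the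
tree. -/
def StrictAntiOnClasses (E : ℕ → X → X → Prop) (r : ℕ → X → Ordinal.{u}) : Prop :=
  ∀ n m x x', n < m → {y | E m x' y} ≠ {x'} → {y | E m x' y} ⊆ {y | E n x y} → r m x' < r n x

namespace StrictAntiOnClasses

variable {r : ℕ → X → Ordinal.{u}} (hr : StrictAntiOnClasses E r)
include hr

theorem lt_of_nodeLT {s t : TreeNode X E} (h : nodeLT E s t) : r t.1.1 t.rep < r s.1.1 s.rep :=
  hr _ _ _ _ h.1 t.class_ne (t.set_eq ▸ s.set_eq ▸ h.2)

theorem treeWF : TreeWF X E :=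
  wellFounded_swap_of_lt _ fun _ _ h => hr.lt_of_nodeLT h

theorem treeRho_le {α : Ordinal.{u}} (hα : ∀ n x, {y | E n x y} ≠ {x} → r n x < α) :
    treeRho X E ≤ α :=
  rhoRel_le_of_lt _ (fun _ _ h => hr.lt_of_nodeLT h) fun s => hα _ _ s.class_ne

end StrictAntiOnClasses

variable {Y : Type u} {F : ℕ → Y → Y → Prop}

/-- `φ` induces the tree homomorphism `(n, [x]_n) ↦ (n, [φ x]_n)` from `T_E^X` to `T_F^Y`. -/
structure IsTreeMap (E : ℕ → X → X → Prop) (F : ℕ → Y → Y → Prop) (φ : X → Y) : Prop where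
  ne_singleton : ∀ n x, {y | E n x y} ≠ {x} → {y | F n (φ x) y} ≠ {φ x}
  subset : ∀ n m x x', n < m → {y | E m x' y} ⊆ {y | E n x y} →
    {y | F m (φ x') y} ⊆ {y | F n (φ x) y}

namespace IsTreeMap

variable {φ : X → Y} (hφ : IsTreeMap E F φ)
include hφ

def nodeMap (s : TreeNode X E) : TreeNode Y F :=
  .ofClass s.1.1 (φ s.rep) (hφ.ne_singleton _ _ s.class_ne)

theorem nodeLT_nodeMap {s t : TreeNode X E} (h : nodeLT E s t) :
    nodeLT F (hφ.nodeMap s) (hφ.nodeMap t) :=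
  ⟨h.1, hφ.subset _ _ _ _ h.1 (t.set_eq ▸ s.set_eq ▸ h.2)⟩

theorem treeWF (hwf : TreeWF Y F) : TreeWF X E :=
  Subrelation.wf (fun {_ _} h => hφ.nodeLT_nodeMap h) (InvImage.wf hφ.nodeMap hwf)

theorem treeRho_le (hwf : TreeWF Y F) : treeRho X E ≤ treeRho Y F :=
  rhoRel_le_of_strictMono hφ.nodeMap (fun _ _ h => hφ.nodeLT_nodeMap h) hwf

end IsTreeMap

theorem setOf_eq_image_of_equiv (e : X ≃ Y) (he : ∀ n x x', E n x x' ↔ F n (e x) (e x'))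
    (n : ℕ) (x : X) : {y | F n (e x) y} = e '' {x' | E n x x'} := by
  ext y
  rw [e.image_eq_preimage_symm]
  change F n (e x) y ↔ E n x (e.symm y)
  rw [he, e.apply_symm_apply]

theorem isTreeMap_of_equiv (e : X ≃ Y) (he : ∀ n x x', E n x x' ↔ F n (e x) (e x')) :
    IsTreeMap E F e where
  ne_singleton n x h := by
    rw [setOf_eq_image_of_equiv e he, ← Set.image_singleton]
    exact fun h' => h (e.injective.image_injective h')
  subset n m x x' _ h := by
    rw [setOf_eq_image_of_equiv e he, setOf_eq_image_of_equiv e he]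
    exact Set.image_mono h

theorem treeRho_eq_of_equiv (e : X ≃ Y) (he : ∀ n x x', E n x x' ↔ F n (e x) (e x'))
    (hwf : TreeWF Y F) : treeRho X E = treeRho Y F := by
  have he' : ∀ n y y', F n y y' ↔ E n (e.symm y) (e.symm y') := fun n y y' => by
    rw [he, e.apply_symm_apply, e.apply_symm_apply]
  have hwf' := (isTreeMap_of_equiv e he).treeWF hwf
  exact ((isTreeMap_of_equiv e he).treeRho_le hwf).antisymm
    ((isTreeMap_of_equiv e.symm he').treeRho_le hwf')

end TreeNode

section ClassRank

variable {X : Type u} {E : ℕ → X → X → Prop}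

open scoped Classical in
def classRank (hwf : TreeWF X E) (n : ℕ) (x : X) : Ordinal.{u} :=
  if h : {y | E n x y} ≠ {x} then (WellFounded.apply hwf (TreeNode.ofClass n x h)).rank else 0

variable (hwf : TreeWF X E)

theorem classRank_of_eq {n : ℕ} {x : X} (h : {y | E n x y} = {x}) : classRank hwf n x = 0 :=
  dif_neg (not_not.2 h)

theorem strictAntiOnClasses_classRank (hrefl : ∀ n x, E n x x) :
    StrictAntiOnClasses E (classRank hwf) := by
  intro n m x x' hnm hne hsub
  have hne' : {y | E n x y} ≠ {x} := by
    intro h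
    rw [h] at hsub
    obtain rfl : x' = x := hsub (hrefl m x')
    exact hne ((Set.nonempty_of_mem (hrefl m x')).subset_singleton_iff.1 hsub)
  rw [classRank, dif_pos hne, classRank, dif_pos hne']
  exact (WellFounded.apply hwf _).rank_lt_of_rel (⟨hnm, hsub⟩ : nodeLT E _ _)

theorem classRank_lt_or_eq_zero (hrefl : ∀ n x, E n x x) {n m : ℕ} {x x' : X} (hnm : n < m)
    (hsub : {y | E m x' y} ⊆ {y | E n x y}) :
    classRank hwf m x' < classRank hwf n x ∨ classRank hwf m x' = 0 := by
  by_cases hne : {y | E m x' y} = {x'}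
  · exact .inr (classRank_of_eq hwf hne)
  · exact .inl (strictAntiOnClasses_classRank hwf hrefl _ _ _ _ hnm hne hsub)

theorem classRank_lt_treeRho {n : ℕ} {x : X} (hne : {y | E n x y} ≠ {x}) :
    classRank hwf n x < treeRho X E := by
  rw [classRank, dif_pos hne]
  exact rank_lt_rhoRel hwf _

theorem classRank_lt_treeRho_or_eq_zero (n : ℕ) (x : X) :
    classRank hwf n x < treeRho X E ∨ classRank hwf n x = 0 := by
  by_cases hne : {y | E n x y} = {x}
  · exact .inr (classRank_of_eq hwf hne)
  · exact .inl (classRank_lt_treeRho hwf hne)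

end ClassRank

section Prod

theorem Ordinal.max_lt_max_of_lt_or_eq_zero {a b A B : Ordinal} (ha : a < A ∨ a = 0)
    (hb : b < B ∨ b = 0) (h : a < A ∨ b < B) : max a b < max A B := by
  have hpos : 0 < max A B := by
    rcases h with h | h
    · exact lt_max_of_lt_left (zero_le.trans_lt h)
    · exact lt_max_of_lt_right (zero_le.trans_lt h)
  refine max_lt ?_ ?_
  · rcases ha with ha | rfl
    exacts [lt_max_of_lt_left ha, hpos]
  · rcases hb with hb | rfl
    exacts [lt_max_of_lt_right hb, hpos]

theorem Set.ne_singleton_or_ne_singleton_of_prod_ne {α β : Type*} {s : Set α} {t : Set β} {a : α}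
    {b : β} (h : s ×ˢ t ≠ {(a, b)}) : s ≠ {a} ∨ t ≠ {b} := by
  contrapose! h
  rw [h.1, h.2, Set.singleton_prod_singleton]

variable {X Y : Type u}

def prodRel (E : ℕ → X → X → Prop) (F : ℕ → Y → Y → Prop) : ℕ → X × Y → X × Y → Prop :=
  fun n p q => E n p.1 q.1 ∧ F n p.2 q.2

variable {E : ℕ → X → X → Prop} {F : ℕ → Y → Y → Prop}

theorem setOf_prodRel (n : ℕ) (p : X × Y) :
    {q | prodRel E F n p q} = {x | E n p.1 x} ×ˢ {y | F n p.2 y} :=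
  rfl

theorem strictAntiOnClasses_prodRel (hErefl : ∀ n x, E n x x) (hFrefl : ∀ n y, F n y y)
    (hwfE : TreeWF X E) (hwfF : TreeWF Y F) :
    StrictAntiOnClasses (prodRel E F)
      fun n p => max (classRank hwfE n p.1) (classRank hwfF n p.2) := by
  intro n m p p' hnm hne hsub
  rw [setOf_prodRel, setOf_prodRel] at hsub
  replace hsub := (Set.prod_subset_prod_iff' ⟨p', hErefl _ _, hFrefl _ _⟩).1 hsub
  exact Ordinal.max_lt_max_of_lt_or_eq_zero
    (classRank_lt_or_eq_zero hwfE hErefl hnm hsub.1)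
    (classRank_lt_or_eq_zero hwfF hFrefl hnm hsub.2)
    ((Set.ne_singleton_or_ne_singleton_of_prod_ne hne).imp
      (strictAntiOnClasses_classRank hwfE hErefl _ _ _ _ hnm · hsub.1)
      (strictAntiOnClasses_classRank hwfF hFrefl _ _ _ _ hnm · hsub.2))

theorem isTreeMap_prodMk_left (hFrefl : ∀ n y, F n y y) (hFanti : Antitone F) (y₀ : Y) :
    IsTreeMap E (prodRel E F) (·, y₀) where
  ne_singleton n x hx h := hx <| by
    have hne : {y | F n y₀ y}.Nonempty := ⟨y₀, hFrefl n y₀⟩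
    rw [← Set.fst_image_prod {x' | E n x x'} hne]
    change Prod.fst '' {q | prodRel E F n (x, y₀) q} = {x}
    rw [h, Set.image_singleton]
  subset _ _ _ _ hnm h := Set.prod_mono h (hFanti hnm.le y₀)

theorem isTreeMap_prodMk_right (hErefl : ∀ n x, E n x x) (hEanti : Antitone E) (x₀ : X) :
    IsTreeMap F (prodRel E F) (x₀, ·) where
  ne_singleton n y hy h := hy <| by
    have hne : {x | E n x₀ x}.Nonempty := ⟨x₀, hErefl n x₀⟩
    rw [← Set.snd_image_prod hne {y' | F n y y'}]
    change Prod.snd '' {q | prodRel E F n (x₀, y) q} = {y}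
    rw [h, Set.image_singleton]
  subset _ _ _ _ hnm h := Set.prod_mono (hEanti hnm.le x₀) h

theorem treeWF_prodRel (hErefl : ∀ n x, E n x x) (hFrefl : ∀ n y, F n y y)
    (hwfE : TreeWF X E) (hwfF : TreeWF Y F) : TreeWF (X × Y) (prodRel E F) :=
  (strictAntiOnClasses_prodRel hErefl hFrefl hwfE hwfF).treeWF

theorem treeRho_prodRel [Nonempty X] [Nonempty Y] (hErefl : ∀ n x, E n x x)
    (hFrefl : ∀ n y, F n y y) (hEanti : Antitone E) (hFanti : Antitone F)
    (hwfE : TreeWF X E) (hwfF : TreeWF Y F) :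
    treeRho (X × Y) (prodRel E F) = max (treeRho X E) (treeRho Y F) := by
  have hwf := treeWF_prodRel hErefl hFrefl hwfE hwfF
  refine le_antisymm ?_ (max_le ?_ ?_)
  · refine (strictAntiOnClasses_prodRel hErefl hFrefl hwfE hwfF).treeRho_le fun n p hne => ?_
    exact Ordinal.max_lt_max_of_lt_or_eq_zero (classRank_lt_treeRho_or_eq_zero hwfE n p.1)
      (classRank_lt_treeRho_or_eq_zero hwfF n p.2)
      ((Set.ne_singleton_or_ne_singleton_of_prod_ne hne).imp (classRank_lt_treeRho hwfE)
        (classRank_lt_treeRho hwfF))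
  · exact (isTreeMap_prodMk_left hFrefl hFanti (Classical.arbitrary Y)).treeRho_le hwf
  · exact (isTreeMap_prodMk_right hErefl hEanti (Classical.arbitrary X)).treeRho_le hwf

end Prod

section Sigma

variable {ι : Type} {X : ι → Type u}

def sigmaRel (E : ∀ i, ℕ → X i → X i → Prop) : ℕ → (Σ i, X i) → (Σ i, X i) → Prop :=
  fun n p q => ∃ b, E p.1 n p.2 b ∧ ⟨p.1, b⟩ = q

variable {E : ∀ i, ℕ → X i → X i → Prop}

theorem setOf_sigmaRel (n : ℕ) (i : ι) (a : X i) :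
    {q | sigmaRel E n ⟨i, a⟩ q} = Sigma.mk i '' {b | E i n a b} :=
  rfl

theorem isTreeMap_sigmaMk (i : ι) : IsTreeMap (E i) (sigmaRel E) (Sigma.mk i) where
  ne_singleton n a ha h := by
    rw [setOf_sigmaRel, ← Set.image_singleton] at h
    exact ha (sigma_mk_injective.image_injective h)
  subset _ _ _ _ _ h := Set.image_mono h

variable (hrefl : ∀ i n a, E i n a a) (hwf : ∀ i, TreeWF (X i) (E i))
include hrefl

theorem strictAntiOnClasses_sigmaRel :
    StrictAntiOnClasses (sigmaRel E) fun n p => classRank (hwf p.1) n p.2 := by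
  rintro n m ⟨i, a⟩ ⟨i', a'⟩ hnm hne hsub
  rw [setOf_sigmaRel, setOf_sigmaRel] at hsub
  obtain ⟨b, -, hb⟩ := hsub ⟨a', hrefl i' m a', rfl⟩
  obtain rfl := (Sigma.mk.inj_iff.1 hb).1
  rw [Set.image_subset_image_iff sigma_mk_injective] at hsub
  rw [setOf_sigmaRel, ← Set.image_singleton] at hne
  exact strictAntiOnClasses_classRank (hwf i) (hrefl i) _ _ _ _ hnm (fun h => hne (h ▸ rfl)) hsub

include hwf in
theorem treeRho_sigmaRel : treeRho (Σ i, X i) (sigmaRel E) = ⨆ i, treeRho (X i) (E i) := by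
  have hr := strictAntiOnClasses_sigmaRel hrefl hwf
  refine (hr.treeRho_le ?_).antisymm
    (Ordinal.iSup_le fun i => (isTreeMap_sigmaMk i).treeRho_le hr.treeWF)
  rintro n ⟨i, a⟩ hne
  refine (classRank_lt_treeRho (hwf i) fun h => hne ?_).trans_le
    (Ordinal.le_iSup (fun i => treeRho (X i) (E i)) i)
  rw [setOf_sigmaRel, h, Set.image_singleton]

end Sigma

section Dgnb

variable {G : Type u} [Group G] [TopologicalSpace G]

theorem Dgnb.antitone_seq (𝒢 : Dgnb G) : Antitone 𝒢.seq :=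
  antitone_nat_of_succ_le 𝒢.antitone

theorem Dgnb.hasAntitoneBasis (𝒢 : Dgnb G) :
    (𝓝 (1 : G)).HasAntitoneBasis fun n => (𝒢.seq n : Set G) where
  mem_iff' U := ⟨fun hU => (𝒢.basis U hU).imp fun _ h => ⟨trivial, h⟩,
    fun ⟨n, _, h⟩ => Filter.mem_of_superset ((𝒢.isOpen n).mem_nhds (one_mem _)) h⟩
  antitone _ _ h := SetLike.coe_subset_coe.2 (𝒢.antitone_seq h)

def Dgnb.prod {H : Type u} [Group H] [TopologicalSpace H] (𝒢 : Dgnb G) (ℋ : Dgnb H) :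
    Dgnb (G × H) where
  seq n := (𝒢.seq n).prod (ℋ.seq n)
  isOpen n := (𝒢.isOpen n).prod (ℋ.isOpen n)
  antitone n := Subgroup.prod_mono (𝒢.antitone n) (ℋ.antitone n)
  zero_eq_top := by rw [𝒢.zero_eq_top, ℋ.zero_eq_top, Subgroup.top_prod_top]
  basis U hU := by
    rw [← Prod.mk_one_one, nhds_prod_eq] at hU
    exact (𝒢.hasAntitoneBasis.prod ℋ.hasAntitoneBasis).mem_iff.1 hU

variable (𝒢 : Dgnb G) (X : Type v) [MulAction G X]

theorem dgnbRel_refl (n : ℕ) (x : X) : dgnbRel 𝒢 X n x x :=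
  ⟨1, one_mem _, one_smul G x⟩

theorem dgnbRel_antitone : Antitone (dgnbRel 𝒢 X) :=
  fun _ _ h _ _ ⟨g, hg, hgx⟩ => ⟨g, 𝒢.antitone_seq h hg, hgx⟩

theorem setOf_dgnbRel_eq_singleton {n : ℕ} {x : X} (h : 𝒢.seq n ≤ MulAction.stabilizer G x) :
    {y | dgnbRel 𝒢 X n x y} = {x} :=
  Set.eq_singleton_iff_unique_mem.2 ⟨dgnbRel_refl 𝒢 X n x, fun _ ⟨_, hg, hgx⟩ => hgx ▸ h hg⟩

end Dgnb

theorem IsCLI.exists_tendsto {G : Type u} [Group G] [TopologicalSpace G] (hcli : IsCLI G)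
    {s : ℕ → G} (hs : Tendsto (fun p : ℕ × ℕ => (s p.1)⁻¹ * s p.2) atTop (𝓝 1)) :
    ∃ a, Tendsto s atTop (𝓝 a) := by
  obtain ⟨m, rfl, hcomplete, hinv⟩ := hcli
  let := m
  refine cauchySeq_tendsto_of_complete (cauchySeq_iff_tendsto_dist_atTop_0.2 ?_)
  convert tendsto_iff_dist_tendsto_zero.1 hs using 2 with p
  rw [← hinv (s p.1) _ 1, mul_inv_cancel_left, mul_one, dist_comm]

section CLI

variable {G : Type u} [Group G] [TopologicalSpace G] [IsTopologicalGroup G]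

/-- Along an infinite branch `(n i, [x i])` pick `h i` with `h i • x 0 = x i` whose successive
quotients lie in ever smaller `G_n`. By completeness `h i` converges to some `b`, so `x i` is
eventually `b • x 0`; but the stabilizer of that point is open, so its classes at deep enough
levels are singletons. -/
theorem IsCLI.treeWF_dgnbRel (hcli : IsCLI G) (𝒢 : Dgnb G) (X : Type v) [TopologicalSpace X]
    [DiscreteTopology X] [MulAction G X] [ContinuousSMul G X] :
    TreeWF X (dgnbRel 𝒢 X) := by
  refine treeWF_of_forall_exists_eq_singleton (dgnbRel_refl 𝒢 X) fun n x hn hx => ?_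
  choose g hg hgx using hx
  let h : ℕ → G := fun i => Nat.rec 1 (fun j hj => g j * hj) i
  have hhx : ∀ i, h i • x 0 = x i := by
    intro i
    induction i with
    | zero => exact one_smul G _
    | succ i ih => rw [← hgx, ← ih]; exact mul_smul _ _ _
  have hmem : ∀ i j, i ≤ j → h j * (h i)⁻¹ ∈ 𝒢.seq i := by
    intro i j hij
    induction j, hij using Nat.le_induction with
    | base => exact (mul_inv_cancel (h i)).symm ▸ one_mem _
    | succ j hij ih =>
      rw [show h (j + 1) = g j * h j from rfl, mul_assoc]
      exact mul_mem (𝒢.antitone_seq (hij.trans (hn.id_le j)) (hg j)) ih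
  have hcauchy : Tendsto (fun p : ℕ × ℕ => (h p.1)⁻¹⁻¹ * (h p.2)⁻¹) atTop (𝓝 1) := by
    refine 𝒢.hasAntitoneBasis.tendsto_right_iff.2 fun N _ => ?_
    filter_upwards [eventually_ge_atTop (N, N)] with ⟨i, j⟩ ⟨hi, hj⟩
    rw [inv_inv]
    rcases le_total i j with hij | hij
    · simpa using 𝒢.antitone_seq hi (inv_mem (hmem i j hij))
    · exact 𝒢.antitone_seq hj (hmem j i hij)
  obtain ⟨a, ha⟩ := hcli.exists_tendsto (s := fun i => (h i)⁻¹) hcauchy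
  have hlim : ∀ᶠ i in atTop, x i = a⁻¹ • x 0 := by
    have := (ha.inv.smul_const (x 0)).eventually_mem
      ((isOpen_discrete {a⁻¹ • x 0}).mem_nhds rfl)
    simpa [hhx] using this
  obtain ⟨N, hN⟩ := 𝒢.basis _ ((stabilizer_isOpen G (a⁻¹ • x 0)).mem_nhds (one_mem _))
  obtain ⟨i, hi, hiN⟩ := (hlim.and (eventually_ge_atTop N)).exists
  refine ⟨i, setOf_dgnbRel_eq_singleton 𝒢 X fun k hk => ?_⟩
  rw [hi]
  exact hN (𝒢.antitone_seq (hiN.trans (hn.id_le i)) hk)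

theorem IsCLI.treeWF_quotient (hcli : IsCLI G) (𝒢 : Dgnb G) (k : ℕ) :
    TreeWF (G ⧸ 𝒢.seq k) (dgnbRel 𝒢 (G ⧸ 𝒢.seq k)) :=
  have := QuotientGroup.discreteTopology (𝒢.isOpen k)
  hcli.treeWF_dgnbRel 𝒢 _

end CLI

theorem QuotientGroup.prodEquiv_smul {G H : Type*} [Group G] [Group H] (A : Subgroup G)
    (B : Subgroup H) (g : G × H) (q : (G × H) ⧸ A.prod B) :
    prodEquiv A B (g • q) = (g.1 • (prodEquiv A B q).1, g.2 • (prodEquiv A B q).2) := by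
  induction q using QuotientGroup.induction_on
  rfl

section Rho

variable {G H : Type u} [Group G] [TopologicalSpace G] [Group H] [TopologicalSpace H]

theorem rhoDgnb_eq_iSup_rhoK (𝒢 : Dgnb G)
    (hwf : ∀ k, TreeWF (G ⧸ 𝒢.seq k) (dgnbRel 𝒢 (G ⧸ 𝒢.seq k))) :
    rhoDgnb 𝒢 = ⨆ k, rhoK 𝒢 k := by
  have hrel : (fun n (p q : Σ k, G ⧸ 𝒢.seq k) => ∃ g ∈ 𝒢.seq n, q = ⟨p.1, g • p.2⟩) =
      sigmaRel fun k => dgnbRel 𝒢 (G ⧸ 𝒢.seq k) := by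
    ext n p q
    exact ⟨fun ⟨g, hg, hq⟩ => ⟨_, ⟨g, hg, rfl⟩, hq.symm⟩,
      fun ⟨_, ⟨g, hg, hgp⟩, hq⟩ => ⟨g, hg, by rw [← hq, hgp]⟩⟩
  rw [rhoDgnb, hrel]
  exact treeRho_sigmaRel (fun k => dgnbRel_refl 𝒢 _) hwf

theorem dgnbRel_prod_iff (𝒢 : Dgnb G) (ℋ : Dgnb H) (k n : ℕ)
    (q q' : (G × H) ⧸ (𝒢.seq k).prod (ℋ.seq k)) :
    dgnbRel (𝒢.prod ℋ) _ n q q' ↔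
      prodRel (dgnbRel 𝒢 (G ⧸ 𝒢.seq k)) (dgnbRel ℋ (H ⧸ ℋ.seq k)) n
        (QuotientGroup.prodEquiv _ _ q) (QuotientGroup.prodEquiv _ _ q') := by
  constructor
  · rintro ⟨g, ⟨hg₁, hg₂⟩, rfl⟩
    rw [QuotientGroup.prodEquiv_smul]
    exact ⟨⟨g.1, hg₁, rfl⟩, ⟨g.2, hg₂, rfl⟩⟩
  · rintro ⟨⟨g₁, hg₁, hq₁⟩, ⟨g₂, hg₂, hq₂⟩⟩
    refine ⟨(g₁, g₂), ⟨hg₁, hg₂⟩, (QuotientGroup.prodEquiv _ _).injective ?_⟩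
    rw [QuotientGroup.prodEquiv_smul, hq₁, hq₂]

variable {𝒢 : Dgnb G} {ℋ : Dgnb H}
  (hwfG : ∀ k, TreeWF (G ⧸ 𝒢.seq k) (dgnbRel 𝒢 (G ⧸ 𝒢.seq k)))
  (hwfH : ∀ k, TreeWF (H ⧸ ℋ.seq k) (dgnbRel ℋ (H ⧸ ℋ.seq k)))
include hwfG hwfH

theorem treeWF_prod_quotient (k : ℕ) :
    TreeWF ((G × H) ⧸ (𝒢.prod ℋ).seq k) (dgnbRel (𝒢.prod ℋ) _) :=
  (isTreeMap_of_equiv _ (dgnbRel_prod_iff 𝒢 ℋ k)).treeWF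
    (treeWF_prodRel (dgnbRel_refl 𝒢 _) (dgnbRel_refl ℋ _) (hwfG k) (hwfH k))

theorem rhoK_prod (k : ℕ) : rhoK (𝒢.prod ℋ) k = max (rhoK 𝒢 k) (rhoK ℋ k) :=
  (treeRho_eq_of_equiv _ (dgnbRel_prod_iff 𝒢 ℋ k)
    (treeWF_prodRel (dgnbRel_refl 𝒢 _) (dgnbRel_refl ℋ _) (hwfG k) (hwfH k))).trans
    (treeRho_prodRel (dgnbRel_refl 𝒢 _) (dgnbRel_refl ℋ _) (dgnbRel_antitone 𝒢 _)
      (dgnbRel_antitone ℋ _) (hwfG k) (hwfH k))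

theorem rhoDgnb_prod : rhoDgnb (𝒢.prod ℋ) = max (rhoDgnb 𝒢) (rhoDgnb ℋ) := by
  rw [rhoDgnb_eq_iSup_rhoK _ (treeWF_prod_quotient hwfG hwfH), rhoDgnb_eq_iSup_rhoK 𝒢 hwfG,
    rhoDgnb_eq_iSup_rhoK ℋ hwfH, ← ciSup_sup_eq Ordinal.bddAbove_of_small
    Ordinal.bddAbove_of_small]
  exact iSup_congr (rhoK_prod hwfG hwfH)

end Rho

theorem omegaPart_mono : Monotone omegaPart :=
  fun _ b h => csSup_le_csSup ⟨b, fun _ hc => hc.2⟩ ⟨0, .inl rfl, zero_le⟩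
    fun _ hc => ⟨hc.1, hc.2.trans h⟩

theorem statement_10_general (G H : Type)
    [Group G] [TopologicalSpace G] [IsTopologicalGroup G]
    [Group H] [TopologicalSpace H] [IsTopologicalGroup H]
    (hcliG : IsCLI G) (hcliH : IsCLI H)
    (𝒢 : Dgnb G) (ℋ : Dgnb H) :
    ∃ 𝒦 : Dgnb (G × H),
      (∀ n, 𝒦.seq n = (𝒢.seq n).prod (ℋ.seq n)) ∧
      (∀ k, rhoK 𝒦 k = max (rhoK 𝒢 k) (rhoK ℋ k)) ∧
      rhoDgnb 𝒦 = max (rhoDgnb 𝒢) (rhoDgnb ℋ) ∧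
      omegaPart (rhoDgnb 𝒦) = max (omegaPart (rhoDgnb 𝒢)) (omegaPart (rhoDgnb ℋ)) := by
  have hwfG := hcliG.treeWF_quotient 𝒢
  have hwfH := hcliH.treeWF_quotient ℋ
  have hρ := rhoDgnb_prod hwfG hwfH
  exact ⟨𝒢.prod ℋ, fun _ => rfl, rhoK_prod hwfG hwfH, hρ, by rw [hρ, omegaPart_mono.map_max]⟩

theorem statement_10 (G H : Type)
    [Group G] [TopologicalSpace G] [IsTopologicalGroup G] [PolishSpace G]
    [Group H] [TopologicalSpace H] [IsTopologicalGroup H] [PolishSpace H]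
    (hnaG : IsNonArch G) (hcliG : IsCLI G) (hnaH : IsNonArch H) (hcliH : IsCLI H)
    (𝒢 : Dgnb G) (ℋ : Dgnb H) :
    ∃ 𝒦 : Dgnb (G × H),
      (∀ n, 𝒦.seq n = (𝒢.seq n).prod (ℋ.seq n)) ∧
      (∀ k, rhoK 𝒦 k = max (rhoK 𝒢 k) (rhoK ℋ k)) ∧
      rhoDgnb 𝒦 = max (rhoDgnb 𝒢) (rhoDgnb ℋ) ∧
      omegaPart (rhoDgnb 𝒦) = max (omegaPart (rhoDgnb 𝒢)) (omegaPart (rhoDgnb ℋ)) :=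
  statement_10_general G H hcliG hcliH 𝒢 ℋ

end
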